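/- Let π : ℝⁿ → ℝᵐ be multi-affine and let X ⊆ ℝⁿ be an axis-aligned hyper-rectangle (a product of closed intervals) with vertex set V_X. Then the image π(X) is contained in the convex hull of { π(v) : v ∈ V_X }. -/
import Mathlib


def MultiAffine {n m : ℕ} (f : (Fin n → ℝ) → (Fin m → ℝ)) : Prop :=
  ∀ (i : Fin n) (x : Fin n → ℝ), ∃ c d : Fin m → ℝ,
    ∀ t : ℝ, f (Function.update x i t) = fun j => t * c j + d j

theorem stmt1 {n m : ℕ} (f : (Fin n → ℝ) → (Fin m → ℝ)) (hf : MultiAffine f)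
    (l h : Fin n → ℝ)
    (X : Set (Fin n → ℝ)) (hX : X = Set.pi Set.univ (fun i => Set.Icc (l i) (h i)))
    (V : Set (Fin n → ℝ)) (hV : V = {v | ∀ i, v i = l i ∨ v i = h i}) :
    f '' X ⊆ convexHull ℝ (f '' V) := by
  subst hX hV
  have key : ∀ S : Finset (Fin n), ∀ x : Fin n → ℝ,
      (∀ i, x i ∈ Set.Icc (l i) (h i)) →
      (∀ i, i ∉ S → x i = l i ∨ x i = h i) →
      f x ∈ convexHull ℝ (f '' {v | ∀ i, v i = l i ∨ v i = h i}) := by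
    intro S
    induction S using Finset.induction_on with
    | empty =>
      intro x hx hv
      exact subset_convexHull ℝ _ ⟨x, fun i => hv i (Finset.notMem_empty i), rfl⟩
    | @insert i S hiS ih =>
      intro x hx hv
      obtain ⟨c, d, hcd⟩ := hf i x
      have hli : l i ≤ h i := (hx i).1.trans (hx i).2
      have hxseg : x i ∈ segment ℝ (l i) (h i) := by
        rw [segment_eq_Icc hli]; exact hx i
      obtain ⟨a, b, ha, hb, hab, hxi⟩ := hxseg
      have mem_upd : ∀ t : ℝ, t = l i ∨ t = h i →
          f (Function.update x i t) ∈
            convexHull ℝ (f '' {v | ∀ j, v j = l j ∨ v j = h j}) := by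
        intro t ht
        apply ih
        · intro j
          rcases eq_or_ne j i with rfl | hj
          · simp only [Function.update_self]
            rcases ht with rfl | rfl
            · exact ⟨le_refl _, hli⟩
            · exact ⟨hli, le_refl _⟩
          · rw [Function.update_of_ne hj]; exact hx j
        · intro j hj
          rcases eq_or_ne j i with rfl | hj'
          · rw [Function.update_self]; exact ht
          · rw [Function.update_of_ne hj']
            exact hv j (by simp [hj, hj'])
      have hA := mem_upd (l i) (Or.inl rfl)
      have hB := mem_upd (h i) (Or.inr rfl)
      have hx' : f x = a • f (Function.update x i (l i))
          + b • f (Function.update x i (h i)) := by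
        have hfx : f x = fun j => x i * c j + d j := by
          conv_lhs => rw [← Function.update_eq_self i x]
          exact hcd (x i)
        rw [hfx, hcd (l i), hcd (h i)]
        funext j
        simp only [Pi.add_apply, Pi.smul_apply, smul_eq_mul]
        rw [← hxi]
        simp only [smul_eq_mul]
        linear_combination (-(d j)) * hab
      rw [hx']
      exact (convex_convexHull ℝ _) hA hB ha hb hab
  rintro _ ⟨x, hx, rfl⟩
  exact key Finset.univ x (fun i => hx i trivial)
    (fun i hi => absurd (Finset.mem_univ i) hi)
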